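/- If G is block-decomposable and o is a node of G of degree 6, then in every block decomposition of G the node o belongs to exactly two blocks, and the pair of blocks containing o is one of the following: a triangle and a square (with o an outlet of the triangle identified with the center of the square), a fork and a square (with o the outlet of the fork identified with the center of the square), or two diamonds (with o an outlet of each diamond). -/

import Mathlib

/-- The six block shapes: spike, triangle, infork, outfork, diamond, square. -/
inductive BlockShape : Type
  | spike | triangle | infork | outfork | diamond | square
  deriving DecidableEq

namespace BlockShape

/-- Number of nodes of each block shape. -/
def numNodes : BlockShape → ℕ
  | spike => 2
  | triangle => 3
  | infork => 3
  | outfork => 3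
  | diamond => 4
  | square => 5

/-- The directed edges of each block shape.
For the spike the nodes are `x = 0, y = 1` with edge `x → y`.
For the triangle the nodes are `0, 1, 2` with edges `0 → 1 → 2 → 0`.
For the infork the nodes are `x = 0, y = 1, c = 2` with edges `x → c`, `y → c`.
For the outfork the nodes are `x = 0, y = 1, c = 2` with edges `c → x`, `c → y`.
For the diamond the nodes are `p = 0, q = 1, x = 2, y = 3` with boundary edges
`p → x, x → q, q → y, y → p` and mid-edge `q → p`.
For the square the nodes are the center `c = 0` and corners `v1 = 1, …, v4 = 4`, with
edges `v1 → v2 → v3 → v4 → v1`, `c → v1`, `v2 → c`, `c → v3`, `v4 → c`. -/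
def edges : (s : BlockShape) → List (Fin s.numNodes × Fin s.numNodes)
  | spike => ([(0, 1)] : List (Fin 2 × Fin 2))
  | triangle => ([(0, 1), (1, 2), (2, 0)] : List (Fin 3 × Fin 3))
  | infork => ([(0, 2), (1, 2)] : List (Fin 3 × Fin 3))
  | outfork => ([(2, 0), (2, 1)] : List (Fin 3 × Fin 3))
  | diamond => ([(0, 2), (2, 1), (1, 3), (3, 0), (1, 0)] : List (Fin 4 × Fin 4))
  | square => ([(1, 2), (2, 3), (3, 4), (4, 1), (0, 1), (2, 0), (0, 3), (4, 0)] :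
      List (Fin 5 × Fin 5))

/-- The outlets (white nodes) of each block shape. -/
def IsOutlet : (s : BlockShape) → Fin s.numNodes → Prop
  | spike, _ => True
  | triangle, _ => True
  | infork, i => (i : ℕ) = 2
  | outfork, i => (i : ℕ) = 2
  | diamond, i => (i : ℕ) = 0 ∨ (i : ℕ) = 1
  | square, i => (i : ℕ) = 0

/-- The degree of a node inside its block (number of incident edges). -/
def blockDeg (s : BlockShape) (i : Fin s.numNodes) : ℕ :=
  s.edges.countP fun e => decide (e.1 = i) || decide (e.2 = i)

end BlockShape

/-- A directed multigraph on a vertex type `V` is given by its edge multiplicity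
function `G : V → V → ℕ`.  It is a directed graph in our sense if it has no loops
and no 2-cycles. -/
def IsDiGraph {V : Type} (G : V → V → ℕ) : Prop :=
  (∀ v, G v v = 0) ∧ ∀ x y, G x y = 0 ∨ G y x = 0

/-- Degree of a node: the number of incident edges counted with multiplicity. -/
def degree {V : Type} [Fintype V] (G : V → V → ℕ) (v : V) : ℕ :=
  ∑ w, (G v w + G w v)

/-- Two nodes are adjacent if some edge joins them (in either direction). -/
def Adj {V : Type} (G : V → V → ℕ) (x y : V) : Prop := 0 < G x y + G y x

/-- `Reach G x y` : `y` lies in the connected component of `x`. -/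
def Reach {V : Type} (G : V → V → ℕ) : V → V → Prop := Relation.ReflTransGen (Adj G)

/-- The connected component of a node, as a finset. -/
noncomputable def component {V : Type} [Fintype V] (G : V → V → ℕ) (v : V) : Finset V :=
  letI := Classical.decPred fun w => Reach G v w
  Finset.univ.filter (Reach G v)

/-- Total number of block edges mapped onto the ordered pair `(x, y)` by the gluing data. -/
def blockMult {V : Type} [DecidableEq V] (n : ℕ) (shape : Fin n → BlockShape)
    (emb : (b : Fin n) → Fin (shape b).numNodes → V) (x y : V) : ℕ :=
  ∑ b : Fin n, (shape b).edges.countP fun e => decide (emb b e.1 = x ∧ emb b e.2 = y)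

/-- A block decomposition of the directed multigraph `G` : a finite collection of blocks
together with an identification of their nodes with the nodes of `G` such that
* each block is embedded injectively,
* nodes of two distinct blocks may be identified only if both are outlets,
* each outlet is identified with at most one other outlet (no vertex lies in three blocks),
* every vertex of `G` comes from some block, and
* the multiplicity of each edge of `G` is the number of block edges giving it minus the
  number of block edges giving the reversed edge (two parallel edges with the same
  direction are kept as a double edge; two parallel edges with opposite directions
  annihilate each other). -/
structure BlockDecomposition {V : Type} [Fintype V] [DecidableEq V] (G : V → V → ℕ) :
    Type where
  n : ℕ
  shape : Fin n → BlockShape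
  emb : (b : Fin n) → Fin (shape b).numNodes → V
  emb_inj : ∀ b, Function.Injective (emb b)
  glue_outlets : ∀ (b c : Fin n) (i : Fin (shape b).numNodes) (j : Fin (shape c).numNodes),
    emb b i = emb c j → b ≠ c → (shape b).IsOutlet i ∧ (shape c).IsOutlet j
  atMostTwo : ∀ (b c d : Fin n) (i : Fin (shape b).numNodes) (j : Fin (shape c).numNodes)
    (k : Fin (shape d).numNodes), emb b i = emb c j → emb b i = emb d k →
    b = c ∨ b = d ∨ c = d
  covers : ∀ v : V, ∃ b i, emb b i = v
  edge_eq : ∀ x y : V, G x y = blockMult n shape emb x y - blockMult n shape emb y x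

/-- The number of block edges of a decomposition lying over the ordered pair `(x, y)`. -/
def BlockDecomposition.mult {V : Type} [Fintype V] [DecidableEq V] {G : V → V → ℕ}
    (D : BlockDecomposition G) : V → V → ℕ :=
  blockMult D.n D.shape D.emb

/-- A graph is (block-)decomposable if it admits a block decomposition. -/
def Decomposable {V : Type} [Fintype V] [DecidableEq V] (G : V → V → ℕ) : Prop :=
  Nonempty (BlockDecomposition G)

/-- The edge `e` of block `b` is annihilated in the decomposition `D` : some edge of
another block lies over the same pair of vertices with the opposite direction. -/
def BlockDecomposition.EdgeAnnihilated {V : Type} [Fintype V] [DecidableEq V]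
    {G : V → V → ℕ} (D : BlockDecomposition G) (b : Fin D.n)
    (e : Fin (D.shape b).numNodes × Fin (D.shape b).numNodes) : Prop :=
  e ∈ (D.shape b).edges ∧
    ∃ (c : Fin D.n) (f : Fin (D.shape c).numNodes × Fin (D.shape c).numNodes),
      c ≠ b ∧ f ∈ (D.shape c).edges ∧ D.emb c f.1 = D.emb b e.2 ∧ D.emb c f.2 = D.emb b e.1

/-! Every edge of `G` at `o` is a block edge at `o`, and every annihilated pair of block edges at
`o` contributes two more, so `6 + 2 a` is the sum of the degrees of `o` in the blocks containing
it, `a` being the number of annihilated pairs.  A node lies in at most two blocks and has degree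
at most `4` in a block, so `o` is an outlet of exactly two blocks.  Outlets of degree `2`, `3`,
`4` are the nodes of a triangle or the center of a fork, the endpoints of the mid-edge of a
diamond, and the center of a square.  The only way to reach `6 + 2 a` with `a > 0` is two square
centers, and these cannot annihilate: no block has a `2`-cycle, and no neighbour of a square
center is an outlet. -/

namespace BlockShape

instance (s : BlockShape) : DecidablePred s.IsOutlet :=
  match s with
  | spike | triangle => fun _ => .isTrue trivial
  | infork | outfork | square => fun i => inferInstanceAs (Decidable ((i : ℕ) = _))
  | diamond => fun i => inferInstanceAs (Decidable ((i : ℕ) = 0 ∨ (i : ℕ) = 1))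

theorem fst_ne_snd_of_mem_edges {s : BlockShape} : ∀ e ∈ s.edges, e.1 ≠ e.2 := by
  cases s <;> decide

theorem swap_not_mem_edges {s : BlockShape} : ∀ e ∈ s.edges, e.swap ∉ s.edges := by
  cases s <;> decide

theorem blockDeg_le_four {s : BlockShape} : ∀ i, s.blockDeg i ≤ 4 := by
  cases s <;> decide

theorem eq_square_of_blockDeg_eq_four {s : BlockShape} :
    ∀ i, s.blockDeg i = 4 → s = square ∧ (i : ℕ) = 0 := by
  cases s <;> decide

theorem eq_diamond_of_isOutlet_of_blockDeg_eq_three {s : BlockShape} :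
    ∀ i, s.IsOutlet i → s.blockDeg i = 3 →
      s = diamond ∧ ((i : ℕ) = 0 ∨ (i : ℕ) = 1) := by
  cases s <;> decide

theorem eq_triangle_or_fork_of_isOutlet_of_blockDeg_eq_two {s : BlockShape} :
    ∀ i, s.IsOutlet i → s.blockDeg i = 2 →
      s = triangle ∨ ((s = infork ∨ s = outfork) ∧ (i : ℕ) = 2) := by
  cases s <;> decide

theorem not_isOutlet_snd_of_blockDeg_eq_four {s : BlockShape} :
    ∀ i, s.blockDeg i = 4 → ∀ e ∈ s.edges, e.1 = i → ¬ s.IsOutlet e.2 := by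
  cases s <;> decide

end BlockShape

theorem sum_countP_out_add_countP_in {α V : Type} [Fintype V] [DecidableEq V] (l : List α)
    (f g : α → V) (v : V) (h : ∀ a ∈ l, f a ≠ g a) :
    ∑ w, (l.countP (fun a => decide (f a = v ∧ g a = w)) +
        l.countP (fun a => decide (f a = w ∧ g a = v))) =
      l.countP (fun a => decide (f a = v) || decide (g a = v)) := by
  induction l with
  | nil => simp
  | cons a l ih =>
    have hfg : f a ≠ g a := h a List.mem_cons_self
    have ih := ih fun b hb => h b (List.mem_cons_of_mem a hb)
    simp only [List.countP_cons, Finset.sum_add_distrib] at ih ⊢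
    by_cases hf : f a = v <;> by_cases hg : g a = v <;> simp_all <;> omega

namespace BlockDecomposition

variable {V : Type} [Fintype V] [DecidableEq V] {G : V → V → ℕ} (D : BlockDecomposition G)

def blockDegAt (c : Fin D.n) (v : V) : ℕ :=
  (D.shape c).edges.countP fun e => decide (D.emb c e.1 = v) || decide (D.emb c e.2 = v)

theorem blockDegAt_eq_blockDeg {c : Fin D.n} {k : Fin (D.shape c).numNodes} {v : V}
    (hk : D.emb c k = v) : D.blockDegAt c v = (D.shape c).blockDeg k := by
  subst hk
  simp only [blockDegAt, BlockShape.blockDeg, (D.emb_inj c).eq_iff]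

theorem blockDegAt_eq_zero {c : Fin D.n} {v : V} (h : ∀ k, D.emb c k ≠ v) :
    D.blockDegAt c v = 0 :=
  List.countP_eq_zero.mpr fun e _ => by simp [h]

theorem sum_mult_add_mult (v : V) :
    ∑ w, (D.mult v w + D.mult w v) = ∑ c, D.blockDegAt c v := by
  simp only [mult, blockMult, ← Finset.sum_add_distrib]
  rw [Finset.sum_comm]
  refine Finset.sum_congr rfl fun c _ => sum_countP_out_add_countP_in _ _ _ v fun e he => ?_
  exact (D.emb_inj c).ne (BlockShape.fst_ne_snd_of_mem_edges e he)

theorem degree_add_two_mul_sum_min (v : V) :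
    degree G v + 2 * ∑ w, min (D.mult v w) (D.mult w v) = ∑ c, D.blockDegAt c v := by
  rw [← sum_mult_add_mult, degree, Finset.mul_sum, ← Finset.sum_add_distrib]
  refine Finset.sum_congr rfl fun w _ => ?_
  have := D.edge_eq v w
  have := D.edge_eq w v
  simp only [mult] at *
  omega

theorem eq_or_eq_of_emb_eq {b b' c : Fin D.n} {i : Fin (D.shape b).numNodes}
    {j : Fin (D.shape b').numNodes} {k : Fin (D.shape c).numNodes} {v : V}
    (hb : D.emb b i = v) (hb' : D.emb b' j = v) (hne : b ≠ b') (hc : D.emb c k = v) :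
    c = b ∨ c = b' := by
  rcases D.atMostTwo c b b' k i j (hc.trans hb.symm) (hc.trans hb'.symm) with h | h | h
  exacts [.inl h, .inr h, absurd h hne]

theorem sum_blockDegAt_eq_single {b : Fin D.n} {i : Fin (D.shape b).numNodes} {v : V}
    (hb : D.emb b i = v) (h : ∀ c k, D.emb c k = v → c = b) :
    ∑ c, D.blockDegAt c v = (D.shape b).blockDeg i := by
  rw [Finset.sum_eq_single_of_mem b (Finset.mem_univ b) fun c _ hc =>
    D.blockDegAt_eq_zero fun k hk => hc (h c k hk), D.blockDegAt_eq_blockDeg hb]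

theorem sum_blockDegAt_eq_pair {b b' : Fin D.n} {i : Fin (D.shape b).numNodes}
    {j : Fin (D.shape b').numNodes} {v : V} (hb : D.emb b i = v) (hb' : D.emb b' j = v)
    (hne : b ≠ b') :
    ∑ c, D.blockDegAt c v = (D.shape b).blockDeg i + (D.shape b').blockDeg j := by
  rw [← D.blockDegAt_eq_blockDeg hb, ← D.blockDegAt_eq_blockDeg hb',
    ← Finset.sum_pair (f := (D.blockDegAt · v)) hne]
  refine (Finset.sum_subset (Finset.subset_univ _) fun c _ hc => ?_).symm
  refine D.blockDegAt_eq_zero fun k hk => hc ?_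
  rcases D.eq_or_eq_of_emb_eq hb hb' hne hk with rfl | rfl <;> simp

theorem exists_mem_edges_of_mult_pos {x y : V} (h : 0 < D.mult x y) :
    ∃ c, ∃ e ∈ (D.shape c).edges, D.emb c e.1 = x ∧ D.emb c e.2 = y := by
  rw [mult, blockMult] at h
  obtain ⟨c, -, hc⟩ := Finset.exists_ne_zero_of_sum_ne_zero h.ne'
  obtain ⟨e, he, hxy⟩ := List.countP_pos_iff.mp (Nat.pos_of_ne_zero hc)
  exact ⟨c, e, he, by simpa using hxy⟩

theorem sum_min_mult_eq_zero {v : V}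
    (hv : ∀ c k, D.emb c k = v → (D.shape c).blockDeg k = 4) :
    ∑ w, min (D.mult v w) (D.mult w v) = 0 := by
  refine Finset.sum_eq_zero fun w _ => Nat.eq_zero_of_not_pos fun hpos => ?_
  obtain ⟨c, e, he, hv₁, hw₁⟩ := D.exists_mem_edges_of_mult_pos (lt_min_iff.mp hpos).1
  obtain ⟨c', f, hf, hw₂, hv₂⟩ := D.exists_mem_edges_of_mult_pos (lt_min_iff.mp hpos).2
  have hdeg := hv c e.1 hv₁
  by_cases hcc' : c = c'
  · subst hcc'
    have hfe : f = e.swap := Prod.ext (D.emb_inj c (hw₂.trans hw₁.symm))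
      (D.emb_inj c (hv₂.trans hv₁.symm))
    exact BlockShape.swap_not_mem_edges e he (hfe ▸ hf)
  · exact BlockShape.not_isOutlet_snd_of_blockDeg_eq_four _ hdeg e he rfl
      (D.glue_outlets c c' e.2 f.1 (hw₁.trans hw₂.symm) hcc').1

def IsDegreeSixPair (v : V) (b b' : Fin D.n) : Prop :=
  (D.shape b = BlockShape.triangle ∧ D.shape b' = BlockShape.square ∧
      (∃ i, D.emb b i = v) ∧ (∃ j, D.emb b' j = v ∧ (j : ℕ) = 0)) ∨
    ((D.shape b = BlockShape.infork ∨ D.shape b = BlockShape.outfork) ∧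
      D.shape b' = BlockShape.square ∧
      (∃ i, D.emb b i = v ∧ (i : ℕ) = 2) ∧ (∃ j, D.emb b' j = v ∧ (j : ℕ) = 0)) ∨
    (D.shape b = BlockShape.diamond ∧ D.shape b' = BlockShape.diamond ∧
      (∃ i, D.emb b i = v ∧ ((i : ℕ) = 0 ∨ (i : ℕ) = 1)) ∧
      (∃ j, D.emb b' j = v ∧ ((j : ℕ) = 0 ∨ (j : ℕ) = 1)))

theorem isDegreeSixPair_of_blockDeg {b b' : Fin D.n} {i : Fin (D.shape b).numNodes}
    {j : Fin (D.shape b').numNodes} {v : V} (hb : D.emb b i = v) (hb' : D.emb b' j = v)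
    (hi : (D.shape b).IsOutlet i) (hj : (D.shape b').IsOutlet j)
    (hle : (D.shape b).blockDeg i ≤ (D.shape b').blockDeg j)
    (hsum : (D.shape b).blockDeg i + (D.shape b').blockDeg j = 6) :
    D.IsDegreeSixPair v b b' := by
  have := BlockShape.blockDeg_le_four j
  obtain h2 | h3 : (D.shape b).blockDeg i = 2 ∨ (D.shape b).blockDeg i = 3 := by omega
  · obtain ⟨hsq, hj0⟩ := BlockShape.eq_square_of_blockDeg_eq_four j (by omega)
    rcases BlockShape.eq_triangle_or_fork_of_isOutlet_of_blockDeg_eq_two i hi h2 with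
      htri | ⟨hfork, hi2⟩
    · exact .inl ⟨htri, hsq, ⟨i, hb⟩, j, hb', hj0⟩
    · exact .inr (.inl ⟨hfork, hsq, ⟨i, hb, hi2⟩, j, hb', hj0⟩)
  · obtain ⟨hd, hi01⟩ := BlockShape.eq_diamond_of_isOutlet_of_blockDeg_eq_three i hi h3
    obtain ⟨hd', hj01⟩ := BlockShape.eq_diamond_of_isOutlet_of_blockDeg_eq_three j hj (by omega)
    exact .inr (.inr ⟨hd, hd', ⟨i, hb, hi01⟩, j, hb', hj01⟩)

end BlockDecomposition

theorem stmt_7_general {V : Type} [Fintype V] [DecidableEq V] (G : V → V → ℕ)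
    (o : V) (ho : degree G o = 6) (D : BlockDecomposition G) :
    ∃ b b' : Fin D.n, b ≠ b' ∧
      (∀ (c : Fin D.n) (k : Fin (D.shape c).numNodes), D.emb c k = o → c = b ∨ c = b') ∧
      ((D.shape b = BlockShape.triangle ∧ D.shape b' = BlockShape.square ∧
          (∃ i, D.emb b i = o) ∧ (∃ j, D.emb b' j = o ∧ (j : ℕ) = 0)) ∨
       ((D.shape b = BlockShape.infork ∨ D.shape b = BlockShape.outfork) ∧
          D.shape b' = BlockShape.square ∧
          (∃ i, D.emb b i = o ∧ (i : ℕ) = 2) ∧ (∃ j, D.emb b' j = o ∧ (j : ℕ) = 0)) ∨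
       (D.shape b = BlockShape.diamond ∧ D.shape b' = BlockShape.diamond ∧
          (∃ i, D.emb b i = o ∧ ((i : ℕ) = 0 ∨ (i : ℕ) = 1)) ∧
          (∃ j, D.emb b' j = o ∧ ((j : ℕ) = 0 ∨ (j : ℕ) = 1)))) := by
  have hcount := D.degree_add_two_mul_sum_min o
  obtain ⟨b, i, hb⟩ := D.covers o
  obtain ⟨b', j, hb', hne⟩ : ∃ b' j, D.emb b' j = o ∧ b ≠ b' := by
    by_contra! hsingle
    rw [D.sum_blockDegAt_eq_single hb fun c k hk => (hsingle c k hk).symm] at hcount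
    have := BlockShape.blockDeg_le_four i
    omega
  have hblocks : ∀ c k, D.emb c k = o → c = b ∨ c = b' := fun c k hk =>
    D.eq_or_eq_of_emb_eq hb hb' hne hk
  have houtlets := D.glue_outlets b b' i j (hb.trans hb'.symm) hne
  rw [D.sum_blockDegAt_eq_pair hb hb' hne] at hcount
  have hi := BlockShape.blockDeg_le_four i
  have hj := BlockShape.blockDeg_le_four j
  have hno_annihilation : ∑ w, min (D.mult o w) (D.mult w o) = 0 := by
    by_contra hann
    obtain ⟨hi4, hj4⟩ : (D.shape b).blockDeg i = 4 ∧ (D.shape b').blockDeg j = 4 := by omega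
    refine hann (D.sum_min_mult_eq_zero fun c k hk => ?_)
    rcases hblocks c k hk with rfl | rfl
    · rwa [D.emb_inj c (hk.trans hb.symm)]
    · rwa [D.emb_inj c (hk.trans hb'.symm)]
  rcases le_total ((D.shape b).blockDeg i) ((D.shape b').blockDeg j) with hle | hle
  · exact ⟨b, b', hne, hblocks,
      D.isDegreeSixPair_of_blockDeg hb hb' houtlets.1 houtlets.2 hle (by omega)⟩
  · exact ⟨b', b, hne.symm, fun c k hk => (hblocks c k hk).symm,
      D.isDegreeSixPair_of_blockDeg hb' hb houtlets.2 houtlets.1 hle (by omega)⟩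

/-- a node of degree 6 of a block-decomposable graph belongs, in every
block decomposition, to exactly two blocks, which form one of the following pairs:
triangle + square (the node an outlet of the triangle and the center of the square),
fork + square (the node the outlet of the fork and the center of the square),
or diamond + diamond (the node an outlet of each diamond). -/
theorem stmt_7 {V : Type} [Fintype V] [DecidableEq V] (G : V → V → ℕ)
    (hG : IsDiGraph G) (o : V) (ho : degree G o = 6) (D : BlockDecomposition G) :
    ∃ b b' : Fin D.n, b ≠ b' ∧
      (∀ (c : Fin D.n) (k : Fin (D.shape c).numNodes), D.emb c k = o → c = b ∨ c = b') ∧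
      ((D.shape b = BlockShape.triangle ∧ D.shape b' = BlockShape.square ∧
          (∃ i, D.emb b i = o) ∧ (∃ j, D.emb b' j = o ∧ (j : ℕ) = 0)) ∨
       ((D.shape b = BlockShape.infork ∨ D.shape b = BlockShape.outfork) ∧
          D.shape b' = BlockShape.square ∧
          (∃ i, D.emb b i = o ∧ (i : ℕ) = 2) ∧ (∃ j, D.emb b' j = o ∧ (j : ℕ) = 0)) ∨
       (D.shape b = BlockShape.diamond ∧ D.shape b' = BlockShape.diamond ∧
          (∃ i, D.emb b i = o ∧ ((i : ℕ) = 0 ∨ (i : ℕ) = 1)) ∧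
          (∃ j, D.emb b' j = o ∧ ((j : ℕ) = 0 ∨ (j : ℕ) = 1)))) :=
  stmt_7_general G o ho D
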